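/- Let A ↣ B ↠ C be a short exact sequence of R-modules. If A is FP_n^{≤d-1}-injective and B is FP_{n+1}^{≤d}-injective, then C is FP_{n+1}^{≤d}-injective. Dually, if B is FP_n^{≤d}-projective and C is FP_{n+1}^{≤d}-projective, then A is FP_n^{≤d}-projective. -/

import Mathlib

universe u

/-- `M` is a finitely `n`-presented `R`-module. -/
def FinNPres (R : Type u) [Ring R] : ℕ → (M : Type u) → [AddCommGroup M] → [Module R M] → Prop
  | 0, M, _, _ => Module.Finite R M
  | n+1, M, _, _ => ∃ (k : ℕ) (f : (Fin k → R) →ₗ[R] M), Function.Surjective f ∧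
      FinNPres R n (LinearMap.ker f)

/-- `M` has projective dimension at most `d` (finite `d`). -/
def ProjDimLE (R : Type u) [Ring R] : ℕ → (M : Type u) → [AddCommGroup M] → [Module R M] → Prop
  | 0, M, _, _ => Module.Projective R M
  | d+1, M, _, _ => ∃ (ι : Type u) (f : (ι →₀ R) →ₗ[R] M), Function.Surjective f ∧
      ProjDimLE R d (LinearMap.ker f)

/-- Projective dimension at most `d` for `d : ℕ∞`; `d = ⊤` imposes no condition. -/
def ProjDimLE' (R : Type u) [Ring R] (d : ℕ∞) (M : Type u) [AddCommGroup M] [Module R M] : Prop :=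
  ∀ k : ℕ, (k : ℕ∞) = d → ProjDimLE R k M

/-- `Ext¹_R(M, N) = 0`, expressed by the splitting of all extensions of `M` by `N`. -/
def Ext1Zero (R : Type u) [Ring R] (M N : Type u) [AddCommGroup M] [Module R M]
    [AddCommGroup N] [Module R N] : Prop :=
  ∀ (X : Type u) [AddCommGroup X] [Module R X] (i : N →ₗ[R] X) (p : X →ₗ[R] M),
    Function.Injective i → Function.Surjective p → LinearMap.range i = LinearMap.ker p →
    ∃ r : X →ₗ[R] N, r ∘ₗ i = LinearMap.id

/-- `N` is `FPₙ^{≤d}`-injective: `Ext¹_R(K, N) = 0` for every finitely `n`-presented `K`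
of projective dimension at most `d`. -/
def FPdInj (R : Type u) [Ring R] (n : ℕ) (d : ℕ∞) (N : Type u)
    [AddCommGroup N] [Module R N] : Prop :=
  ∀ (K : Type u) [AddCommGroup K] [Module R K],
    FinNPres R n K → ProjDimLE' R d K → Ext1Zero R K N

/-- `M` is `FPₙ^{≤d}`-projective: `Ext¹_R(M, N) = 0` for every `FPₙ^{≤d}`-injective `N`. -/
def FPdProj (R : Type u) [Ring R] (n : ℕ) (d : ℕ∞) (M : Type u)
    [AddCommGroup M] [Module R M] : Prop :=
  ∀ (N : Type u) [AddCommGroup N] [Module R N], FPdInj R n d N → Ext1Zero R M N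

/-!
For `C`: a finitely `(n+1)`-presented `K` of projective dimension `≤ d` has a presentation
`0 → L → Rᵏ → K → 0` with `L` finitely `n`-presented and, by Schanuel's lemma, of projective
dimension `≤ d - 1`. Then `Ext¹(K, C) = 0` amounts to every map `L → C` extending to `Rᵏ`; such a
map lifts to `B` since `Ext¹(L, A) = 0`, and the lift extends since `Ext¹(K, B) = 0`.

For `A`: embed an `FPₙ^{≤d}`-injective `N` into an injective `E`. By the first half `E ⧸ N` is
`FPₙ₊₁^{≤d}`-injective, and `Ext¹(A, N) = 0` amounts to every map `A → E ⧸ N` lifting to `E`; such a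
map extends to `B` since `Ext¹(C, E ⧸ N) = 0`, and the extension lifts since `Ext¹(B, N) = 0`.
-/

open LinearMap

namespace LinearMap

variable {R : Type*} [Ring R] {M N P : Type*} [AddCommGroup M] [Module R M]
  [AddCommGroup N] [Module R N] [AddCommGroup P] [Module R P]

theorem exists_comp_eq_of_ker_le {p : M →ₗ[R] N} (hp : Function.Surjective p) {t : M →ₗ[R] P}
    (h : ker p ≤ ker t) : ∃ σ : N →ₗ[R] P, σ ∘ₗ p = t :=
  ⟨(ker p).liftQ t h ∘ₗ (p.quotKerEquivOfSurjective hp).symm.toLinearMap, by ext; simp⟩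

theorem exists_comp_eq_of_range_le {i : N →ₗ[R] M} (hi : Function.Injective i) {t : P →ₗ[R] M}
    (h : range t ≤ range i) : ∃ σ : P →ₗ[R] N, i ∘ₗ σ = t :=
  ⟨(LinearEquiv.ofInjective i hi).symm.toLinearMap ∘ₗ t.codRestrict _ (fun x => h ⟨x, rfl⟩), by
    ext x
    exact congrArg Subtype.val ((LinearEquiv.ofInjective i hi).apply_symm_apply _)⟩

end LinearMap

variable {R : Type u} [Ring R]

theorem exists_section_iff_exists_retraction {M N P : Type*} [AddCommGroup M] [Module R M]
    [AddCommGroup N] [Module R N] [AddCommGroup P] [Module R P] {i : M →ₗ[R] N}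
    {p : N →ₗ[R] P} (hi : Function.Injective i) (hp : Function.Surjective p)
    (hex : range i = ker p) :
    (∃ s : P →ₗ[R] N, p ∘ₗ s = LinearMap.id) ↔ ∃ r : N →ₗ[R] M, r ∘ₗ i = LinearMap.id :=
  ((LinearMap.exact_iff.mpr hex.symm).split_tfae hi hp).out 0 1

theorem ext1Zero_iff_forall_section {K N : Type u} [AddCommGroup K] [Module R K]
    [AddCommGroup N] [Module R N] :
    Ext1Zero R K N ↔ ∀ (X : Type u) [AddCommGroup X] [Module R X] (i : N →ₗ[R] X)
      (p : X →ₗ[R] K), Function.Injective i → Function.Surjective p →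
      range i = ker p → ∃ s : K →ₗ[R] X, p ∘ₗ s = LinearMap.id := by
  refine forall_congr' fun X => ?_
  exact ⟨fun h _ _ i p hi hp hex => (exists_section_iff_exists_retraction hi hp hex).mpr
      (h i p hi hp hex),
    fun h _ _ i p hi hp hex => (exists_section_iff_exists_retraction hi hp hex).mp
      (h i p hi hp hex)⟩

namespace LinearMap

variable {A B C L : Type*} [AddCommGroup A] [Module R A] [AddCommGroup B] [Module R B]
  [AddCommGroup C] [Module R C] [AddCommGroup L] [Module R L]

def pullback (g : B →ₗ[R] C) (ψ : L →ₗ[R] C) : Submodule R (B × L) :=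
  ker (g ∘ₗ fst R B L - ψ ∘ₗ snd R B L)

theorem mem_pullback {g : B →ₗ[R] C} {ψ : L →ₗ[R] C} {x : B × L} :
    x ∈ g.pullback ψ ↔ g x.1 = ψ x.2 := by
  simp [LinearMap.pullback, sub_eq_zero]

def pullbackComm (g : B →ₗ[R] C) (ψ : L →ₗ[R] C) :
    g.pullback ψ ≃ₗ[R] ψ.pullback g :=
  (LinearEquiv.prodComm R B L).ofSubmodules _ _ <| by
    ext ⟨l, b⟩
    simp [Submodule.mem_map_equiv, mem_pullback, eq_comm]

theorem pullback_snd_surjective {g : B →ₗ[R] C} (hg : Function.Surjective g)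
    (ψ : L →ₗ[R] C) : Function.Surjective (snd R B L ∘ₗ (g.pullback ψ).subtype) := fun l => by
  obtain ⟨b, hb⟩ := hg (ψ l)
  exact ⟨⟨(b, l), mem_pullback.mpr hb⟩, rfl⟩

theorem exists_exact_pullback {f : A →ₗ[R] B} {g : B →ₗ[R] C}
    (hf : Function.Injective f) (hex : range f = ker g) (ψ : L →ₗ[R] C) :
    ∃ ι : A →ₗ[R] g.pullback ψ, Function.Injective ι ∧
      range ι = ker (snd R B L ∘ₗ (g.pullback ψ).subtype) := by
  have hgf : ∀ a, g (f a) = 0 := fun a =>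
    mem_ker.mp (hex ▸ mem_range_self f a)
  refine ⟨(inl R B L ∘ₗ f).codRestrict _ fun a => by simp [mem_pullback, hgf],
    fun a a' h => hf (congrArg (fun x => x.1.1) h), ?_⟩
  ext ⟨⟨b, l⟩, hbl⟩
  simp only [mem_range, mem_ker, coe_comp, Function.comp_apply, Submodule.coe_subtype, snd_apply]
  constructor
  · rintro ⟨a, ha⟩
    exact (congrArg (fun x => x.1.2) ha).symm
  · rintro rfl
    obtain ⟨a, rfl⟩ : b ∈ range f := by
      rw [hex, mem_ker]; simpa [mem_pullback] using hbl
    exact ⟨a, rfl⟩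

end LinearMap

theorem exists_exact_pushout {A B C N : Type u} [AddCommGroup A] [Module R A]
    [AddCommGroup B] [Module R B] [AddCommGroup C] [Module R C] [AddCommGroup N] [Module R N]
    {f : A →ₗ[R] B} {g : B →ₗ[R] C} (hf : Function.Injective f) (hg : Function.Surjective g)
    (hex : range f = ker g) (φ : A →ₗ[R] N) :
    ∃ (Q : Type u) (_ : AddCommGroup Q) (_ : Module R Q) (ι : N →ₗ[R] Q) (π : Q →ₗ[R] C)
      (β : B →ₗ[R] Q), Function.Injective ι ∧ Function.Surjective π ∧ range ι = ker π ∧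
        β ∘ₗ f = ι ∘ₗ φ := by
  set W : Submodule R (N × B) := range (φ.prod (-f))
  have hgf : ∀ a, g (f a) = 0 := fun a =>
    mem_ker.mp (hex ▸ mem_range_self f a)
  have hW : W ≤ ker (g ∘ₗ snd R N B) := by
    rintro _ ⟨a, rfl⟩
    simp [hgf]
  refine ⟨_, _, _, W.mkQ ∘ₗ inl R N B, W.liftQ _ hW, W.mkQ ∘ₗ inr R N B, ?_, ?_, ?_, ?_⟩
  · intro x y hxy
    obtain ⟨a, ha⟩ := (Submodule.Quotient.eq W).mp hxy
    obtain rfl : a = 0 := hf (by simpa using congrArg Prod.snd ha)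
    simpa [sub_eq_zero, eq_comm] using congrArg Prod.fst ha
  · intro c
    obtain ⟨b, rfl⟩ := hg c
    exact ⟨W.mkQ (0, b), by simp⟩
  · refine le_antisymm (by rintro _ ⟨x, rfl⟩; simp) fun z hz => ?_
    obtain ⟨⟨x, b⟩, rfl⟩ := W.mkQ_surjective z
    obtain ⟨a, rfl⟩ : b ∈ range f := by simpa [hex] using hz
    refine ⟨x + φ a, (Submodule.Quotient.eq W).mpr ⟨a, ?_⟩⟩
    simp
  · ext a
    simp only [coe_comp, Function.comp_apply, inr_apply, inl_apply, Submodule.mkQ_apply]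
    refine (Submodule.Quotient.eq W).mpr ⟨-a, ?_⟩
    simp

section Ext1Zero

variable {A B C K L N : Type u} [AddCommGroup A] [Module R A] [AddCommGroup B] [Module R B]
  [AddCommGroup C] [Module R C] [AddCommGroup K] [Module R K] [AddCommGroup L] [Module R L]
  [AddCommGroup N] [Module R N]

theorem Ext1Zero.exists_lift (h : Ext1Zero R L A) {f : A →ₗ[R] B} {g : B →ₗ[R] C}
    (hf : Function.Injective f) (hg : Function.Surjective g) (hex : range f = ker g)
    (ψ : L →ₗ[R] C) : ∃ ψ' : L →ₗ[R] B, g ∘ₗ ψ' = ψ := by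
  obtain ⟨ι, hι, hιex⟩ := exists_exact_pullback hf hex ψ
  obtain ⟨s, hs⟩ := ext1Zero_iff_forall_section.mp h _ ι _ hι (pullback_snd_surjective hg ψ) hιex
  refine ⟨fst R B L ∘ₗ (g.pullback ψ).subtype ∘ₗ s, LinearMap.ext fun l => ?_⟩
  have hsl : (s l : B × L).2 = l := LinearMap.congr_fun hs l
  simpa [hsl] using mem_pullback.mp (s l).2

theorem Ext1Zero.exists_extend (h : Ext1Zero R C N) {f : A →ₗ[R] B} {g : B →ₗ[R] C}
    (hf : Function.Injective f) (hg : Function.Surjective g) (hex : range f = ker g)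
    (φ : A →ₗ[R] N) : ∃ φ' : B →ₗ[R] N, φ' ∘ₗ f = φ := by
  obtain ⟨Q, _, _, ι, π, β, hι, hπ, hιπ, hβ⟩ := exists_exact_pushout hf hg hex φ
  obtain ⟨r, hr⟩ := h Q ι π hι hπ hιπ
  exact ⟨r ∘ₗ β, by rw [comp_assoc, hβ, ← comp_assoc, hr, id_comp]⟩

theorem ext1Zero_of_injective [Module.Injective R N] : Ext1Zero R K N :=
  fun _ _ _ i _ hi _ _ => by
    obtain ⟨r, hr⟩ := Module.Injective.out i hi LinearMap.id
    exact ⟨r, LinearMap.ext hr⟩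

theorem ext1Zero_of_forall_extend {F : Type u} [AddCommGroup F] [Module R F]
    [Module.Projective R F] {ι : L →ₗ[R] F} {q : F →ₗ[R] K} (hq : Function.Surjective q)
    (hex : range ι = ker q) (hext : ∀ φ : L →ₗ[R] N, ∃ ψ : F →ₗ[R] N, ψ ∘ₗ ι = φ) :
    Ext1Zero R K N := by
  refine ext1Zero_iff_forall_section.mpr fun X _ _ i p hi hp hexX => ?_
  obtain ⟨φ, hφ⟩ := Module.projective_lifting_property p q hp
  obtain ⟨θ, hθ⟩ : ∃ θ : L →ₗ[R] N, i ∘ₗ θ = φ ∘ₗ ι := exists_comp_eq_of_range_le hi <| by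
    rintro _ ⟨l, rfl⟩
    rw [hexX, mem_ker, comp_apply, ← comp_apply p, hφ, ← mem_ker, ← hex]
    exact mem_range_self ι l
  obtain ⟨Θ, hΘ⟩ := hext θ
  obtain ⟨σ, hσ⟩ : ∃ σ : K →ₗ[R] X, σ ∘ₗ q = φ - i ∘ₗ Θ := exists_comp_eq_of_ker_le hq <| by
    rw [← hex]
    rintro _ ⟨l, rfl⟩
    simp [← comp_apply φ, ← hθ, ← comp_apply Θ, hΘ]
  refine ⟨σ, (cancel_right hq).mp ?_⟩
  have hpi : p ∘ₗ i = 0 := range_le_ker_iff.mp hexX.le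
  rw [comp_assoc, hσ, comp_sub, hφ, ← comp_assoc, hpi, zero_comp, sub_zero, id_comp]

theorem ext1Zero_of_forall_lift {E N' : Type u} [AddCommGroup E] [Module R E]
    [Module.Injective R E] [AddCommGroup N'] [Module R N'] {j : N →ₗ[R] E} {π : E →ₗ[R] N'}
    (hj : Function.Injective j) (hex : range j = ker π)
    (hlift : ∀ φ : A →ₗ[R] N', ∃ ψ : A →ₗ[R] E, π ∘ₗ ψ = φ) : Ext1Zero R A N := by
  intro X _ _ i p hi hp hexX
  obtain ⟨h, hh⟩ := Module.Injective.out i hi j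
  obtain ⟨hbar, hhbar⟩ : ∃ hbar : A →ₗ[R] N', hbar ∘ₗ p = π ∘ₗ h :=
    exists_comp_eq_of_ker_le hp <| by
      rw [← hexX]
      rintro _ ⟨x, rfl⟩
      simpa [hh] using (hex ▸ mem_range_self j x : j x ∈ ker π)
  obtain ⟨w, hw⟩ := hlift hbar
  obtain ⟨r, hr⟩ : ∃ r : X →ₗ[R] N, j ∘ₗ r = h - w ∘ₗ p := exists_comp_eq_of_range_le hj <| by
    rintro _ ⟨x, rfl⟩
    rw [hex, mem_ker, LinearMap.sub_apply, map_sub, comp_apply, ← comp_apply π w, hw,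
      ← comp_apply hbar, hhbar, comp_apply, sub_self]
  refine ⟨r, (cancel_left hj).mp (LinearMap.ext fun x => ?_)⟩
  have hpi : p (i x) = 0 := mem_ker.mp (hexX ▸ mem_range_self i x)
  simp [← comp_apply j r, hr, hh, hpi]

end Ext1Zero

theorem nonempty_linearEquiv_prod_of_exact {M S P : Type*} [AddCommGroup M] [Module R M]
    [AddCommGroup S] [Module R S] [AddCommGroup P] [Module R P] [Module.Projective R P]
    {i : M →ₗ[R] S} {p : S →ₗ[R] P} (hi : Function.Injective i) (hp : Function.Surjective p)
    (hex : range i = ker p) : Nonempty (S ≃ₗ[R] M × P) := by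
  obtain ⟨s, hs⟩ := Module.projective_lifting_property p LinearMap.id hp
  exact ⟨((LinearMap.exact_iff.mpr hex.symm).splitSurjectiveEquiv hi ⟨s, hs⟩).1⟩

theorem Module.Projective.ker_of_surjective {F K : Type*} [AddCommGroup F] [Module R F]
    [AddCommGroup K] [Module R K] [Module.Projective R F] [Module.Projective R K]
    {q : F →ₗ[R] K} (hq : Function.Surjective q) : Module.Projective R (ker q) := by
  obtain ⟨s, hs⟩ := Module.projective_lifting_property q LinearMap.id hq
  obtain ⟨r, hr⟩ := (exists_section_iff_exists_retraction (ker q).injective_subtype hq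
    (Submodule.range_subtype _)).mp ⟨s, hs⟩
  exact Module.Projective.of_split _ r hr

theorem schanuel {F F' K : Type u} [AddCommGroup F] [Module R F] [AddCommGroup F']
    [Module R F'] [AddCommGroup K] [Module R K] [Module.Projective R F] [Module.Projective R F']
    {q : F →ₗ[R] K} {q' : F' →ₗ[R] K} (hq : Function.Surjective q)
    (hq' : Function.Surjective q') : Nonempty ((ker q × F') ≃ₗ[R] (ker q' × F)) := by
  obtain ⟨ι, hι, hιex⟩ := exists_exact_pullback (ker q).injective_subtype
    (Submodule.range_subtype _) q'
  obtain ⟨ι', hι', hιex'⟩ := exists_exact_pullback (ker q').injective_subtype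
    (Submodule.range_subtype _) q
  obtain ⟨e⟩ := nonempty_linearEquiv_prod_of_exact hι (pullback_snd_surjective hq q') hιex
  obtain ⟨e'⟩ := nonempty_linearEquiv_prod_of_exact hι' (pullback_snd_surjective hq' q) hιex'
  exact ⟨e.symm ≪≫ₗ q.pullbackComm q' ≪≫ₗ e'⟩

namespace ProjDimLE

variable {M L F : Type u} [AddCommGroup M] [Module R M] [AddCommGroup L] [Module R L]
  [AddCommGroup F] [Module R F]

theorem of_equiv : ∀ {e : ℕ} {M M' : Type u} [AddCommGroup M] [Module R M] [AddCommGroup M']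
    [Module R M'], (M ≃ₗ[R] M') → ProjDimLE R e M → ProjDimLE R e M'
  | 0, M, _, _, _, _, _, eqv, h =>
    have : Module.Projective R M := h
    Module.Projective.of_equiv eqv
  | _ + 1, _, _, _, _, _, _, eqv, ⟨ι, f, hf, h⟩ =>
    ⟨ι, eqv.toLinearMap ∘ₗ f, eqv.surjective.comp hf, by rwa [LinearEquiv.ker_comp]⟩

theorem succ_of_exact [Module.Free R F] {e : ℕ} {i : L →ₗ[R] F} {p : F →ₗ[R] M}
    (hi : Function.Injective i) (hp : Function.Surjective p) (hex : range i = ker p)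
    (h : ProjDimLE R e L) : ProjDimLE R (e + 1) M := by
  let b := (Module.Free.chooseBasis R F).repr
  refine ⟨_, p ∘ₗ b.symm.toLinearMap, hp.comp b.symm.surjective, h.of_equiv ?_⟩
  refine LinearEquiv.ofInjective i hi ≪≫ₗ b.ofSubmodules _ _ ?_
  rw [hex, ker_comp, Submodule.comap_equiv_eq_map_symm, LinearEquiv.symm_symm]

theorem succ : ∀ {e : ℕ} {M : Type u} [AddCommGroup M] [Module R M],
    ProjDimLE R e M → ProjDimLE R (e + 1) M
  | 0, M, _, _, h => by
    have : Module.Projective R M := h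
    have hf : Function.Surjective (Finsupp.linearCombination R (id : M → M)) :=
      fun m => ⟨Finsupp.single m 1, by simp⟩
    exact ⟨M, _, hf, Module.Projective.ker_of_surjective hf⟩
  | _ + 1, _, _, _, ⟨ι, f, hf, h⟩ => ⟨ι, f, hf, succ h⟩

theorem mono {k l : ℕ} (hkl : k ≤ l) (h : ProjDimLE R k M) : ProjDimLE R l M := by
  induction l, hkl using Nat.le_induction with
  | base => exact h
  | succ l _ ih => exact succ ih

theorem prod_free [Module.Free R F] : ∀ {e : ℕ}, ProjDimLE R e M → ProjDimLE R e (M × F)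
  | 0, h => by
    have : Module.Projective R M := h
    exact (inferInstance : Module.Projective R (M × F))
  | _ + 1, ⟨ι, f, hf, h⟩ => by
    refine succ_of_exact (i := inl R (ι →₀ R) F ∘ₗ (ker f).subtype) (p := f.prodMap LinearMap.id)
      (inl_injective.comp (ker f).injective_subtype) ?_ ?_ h
    · exact fun x => ⟨(_, x.2), Prod.ext (hf x.1).choose_spec rfl⟩
    · rw [ker_prodMap, ker_id, range_comp, Submodule.range_subtype, Submodule.map_inl]

theorem of_prod_free [Module.Free R F] : ∀ {e : ℕ}, ProjDimLE R e (M × F) → ProjDimLE R e M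
  | 0, h => by
    have : Module.Projective R (M × F) := h
    exact Module.Projective.of_split (inl R M F) (fst R M F) (by ext; simp)
  | e + 1, ⟨ι, f, hf, h⟩ => by
    have hπ : Function.Surjective (fst R M F ∘ₗ f) :=
      Prod.fst_surjective.comp hf
    have hle : ker f ≤ ker (fst R M F ∘ₗ f) := fun x hx => by simp_all
    have hρ : Function.Surjective (snd R M F ∘ₗ f ∘ₗ (ker (fst R M F ∘ₗ f)).subtype) := by
      intro y
      obtain ⟨x, hx⟩ := hf (0, y)
      exact ⟨⟨x, by simp [hx]⟩, by simp [hx]⟩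
    have hex : range (Submodule.inclusion hle) =
        ker (snd R M F ∘ₗ f ∘ₗ (ker (fst R M F ∘ₗ f)).subtype) := by
      ext ⟨x, hx⟩
      have hx1 : (f x).1 = 0 := hx
      simp [Submodule.range_inclusion, Prod.ext_iff, hx1]
    obtain ⟨eqv⟩ := nonempty_linearEquiv_prod_of_exact (M := ker f) (S := ker (fst R M F ∘ₗ f))
      (Submodule.inclusion_injective hle) hρ hex
    exact ⟨ι, _, hπ, (prod_free h).of_equiv eqv.symm⟩

theorem ker_of_surjective [Module.Free R F] {q : F →ₗ[R] M} (hq : Function.Surjective q) {m : ℕ}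
    (h : ProjDimLE R (m + 1) M) : ProjDimLE R m (ker q) := by
  obtain ⟨ι, f, hf, hL⟩ := h
  obtain ⟨e⟩ := schanuel hq hf
  exact of_prod_free ((prod_free hL).of_equiv e.symm)

end ProjDimLE

namespace ProjDimLE'

variable {M : Type u} [AddCommGroup M] [Module R M]

theorem mono {d d' : ℕ∞} (hd : d' ≤ d) (h : ProjDimLE' R d' M) : ProjDimLE' R d M := by
  rintro k rfl
  lift d' to ℕ using ne_top_of_le_ne_top (ENat.natCast_ne_top k) hd
  exact (h d' rfl).mono (by exact_mod_cast hd)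

theorem ker_of_surjective {F : Type u} [AddCommGroup F] [Module R F] [Module.Free R F]
    {q : F →ₗ[R] M} (hq : Function.Surjective q) {d : ℕ∞} (h : ProjDimLE' R d M) :
    ProjDimLE' R (d - 1) (ker q) := by
  -- in `ℕ∞`, `⊤ - 1 = ⊤` and `0 - 1 = 0`: the case `d = 0` is that of a projective `M`
  intro k hk
  obtain ⟨m, rfl⟩ : ∃ m : ℕ, d = m := by
    cases d with
    | top => simp at hk
    | coe m => exact ⟨m, rfl⟩
  obtain rfl : k = m - 1 := by exact_mod_cast hk.trans (ENat.natCast_sub m 1).symm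
  cases m with
  | zero =>
    have : Module.Projective R M := h 0 rfl
    exact Module.Projective.ker_of_surjective hq
  | succ m => exact (h (m + 1) rfl).ker_of_surjective hq

end ProjDimLE'

section FP

variable {A B C N : Type u} [AddCommGroup A] [Module R A] [AddCommGroup B] [Module R B]
  [AddCommGroup C] [Module R C] [AddCommGroup N] [Module R N]

theorem FPdInj.mono {n : ℕ} {d d' : ℕ∞} (hd : d' ≤ d) (h : FPdInj R n d N) : FPdInj R n d' N :=
  fun K _ _ hK hKd => h K hK (hKd.mono hd)

theorem FPdInj.of_injective [Module.Injective R N] {n : ℕ} {d : ℕ∞} : FPdInj R n d N :=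
  fun _ _ _ _ _ => ext1Zero_of_injective

theorem FPdInj.right_of_shortExact {n : ℕ} {d : ℕ∞} {f : A →ₗ[R] B} {g : B →ₗ[R] C}
    (hf : Function.Injective f) (hg : Function.Surjective g) (hex : range f = ker g)
    (hA : FPdInj R n (d - 1) A) (hB : FPdInj R (n + 1) d B) : FPdInj R (n + 1) d C := by
  intro K _ _ hK hKd
  obtain ⟨k, q, hq, hL⟩ := hK
  refine ext1Zero_of_forall_extend hq (Submodule.range_subtype _) fun ψ => ?_
  obtain ⟨ψ', hψ'⟩ := (hA _ hL (hKd.ker_of_surjective hq)).exists_lift hf hg hex ψ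
  obtain ⟨Ψ, hΨ⟩ := (hB K ⟨k, q, hq, hL⟩ hKd).exists_extend (ker q).injective_subtype hq
    (Submodule.range_subtype _) ψ'
  exact ⟨g ∘ₗ Ψ, by rw [comp_assoc, hΨ, hψ']⟩

variable (R) in
theorem exists_injective_linearMap_to_injective (N : Type u) [AddCommGroup N] [Module R N] :
    ∃ (E : Type u) (_ : AddCommGroup E) (_ : Module R E) (j : N →ₗ[R] E),
      Function.Injective j ∧ Module.Injective R E := by
  let j := CategoryTheory.Injective.ι (ModuleCat.of R N)
  exact ⟨_, _, _, j.hom, (ModuleCat.mono_iff_injective j).mp inferInstance,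
    Module.injective_module_of_injective_object R _
      (inj := CategoryTheory.Injective.injective_under _)⟩

theorem FPdProj.left_of_shortExact {n : ℕ} {d : ℕ∞} {f : A →ₗ[R] B} {g : B →ₗ[R] C}
    (hf : Function.Injective f) (hg : Function.Surjective g) (hex : range f = ker g)
    (hB : FPdProj R n d B) (hC : FPdProj R (n + 1) d C) : FPdProj R n d A := by
  intro N _ _ hN
  obtain ⟨E, _, _, j, hj, hE⟩ := exists_injective_linearMap_to_injective R N
  have hjπ : range j = ker (range j).mkQ := (Submodule.ker_mkQ _).symm
  have hN' : FPdInj R (n + 1) d (E ⧸ range j) :=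
    (hN.mono tsub_le_self).right_of_shortExact hj (range j).mkQ_surjective hjπ FPdInj.of_injective
  refine ext1Zero_of_forall_lift hj hjπ fun φ => ?_
  obtain ⟨v, hv⟩ := (hC _ hN').exists_extend hf hg hex φ
  obtain ⟨w, hw⟩ := (hB N hN).exists_lift hj (range j).mkQ_surjective hjπ v
  exact ⟨w ∘ₗ f, by rw [← comp_assoc, hw, hv]⟩

end FP

theorem fpdInj_fpdProj_ses_general (R : Type u) [Ring R] (n : ℕ) (d : ℕ∞)
    (A B C : Type u) [AddCommGroup A] [Module R A] [AddCommGroup B] [Module R B]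
    [AddCommGroup C] [Module R C] (f : A →ₗ[R] B) (g : B →ₗ[R] C)
    (hf : Function.Injective f) (hg : Function.Surjective g)
    (hex : LinearMap.range f = LinearMap.ker g) :
    (FPdInj R n (d - 1) A → FPdInj R (n + 1) d B → FPdInj R (n + 1) d C) ∧
    (FPdProj R n d B → FPdProj R (n + 1) d C → FPdProj R n d A) :=
  ⟨FPdInj.right_of_shortExact hf hg hex, FPdProj.left_of_shortExact hf hg hex⟩

/-- Let `A ↣ B ↠ C` be a short exact sequence.  If `A` is `FPₙ^{≤d-1}`-injective and `B` is
`FPₙ₊₁^{≤d}`-injective, then `C` is `FPₙ₊₁^{≤d}`-injective.  Dually, if `B` is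
`FPₙ^{≤d}`-projective and `C` is `FPₙ₊₁^{≤d}`-projective, then `A` is `FPₙ^{≤d}`-projective. -/
theorem fpdInj_fpdProj_ses (R : Type u) [Ring R] (n : ℕ) (hn : 1 ≤ n) (d : ℕ∞) (hd : 1 ≤ d)
    (A B C : Type u) [AddCommGroup A] [Module R A] [AddCommGroup B] [Module R B]
    [AddCommGroup C] [Module R C] (f : A →ₗ[R] B) (g : B →ₗ[R] C)
    (hf : Function.Injective f) (hg : Function.Surjective g)
    (hex : LinearMap.range f = LinearMap.ker g) :
    (FPdInj R n (d - 1) A → FPdInj R (n + 1) d B → FPdInj R (n + 1) d C) ∧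
    (FPdProj R n d B → FPdProj R (n + 1) d C → FPdProj R n d A) :=
  fpdInj_fpdProj_ses_general R n d A B C f g hf hg hex
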